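/- arXiv:1004.4671 — 3 statements merged into one kernel-verified Lean document; each statement's English description precedes it below -/
import Mathlib

section
/- Let ψ(z) = (1/2)σ²z² + μz + z² Σ_{n≥1} a_n/(ρ_n(ρ_n − z)) + z² Σ_{n≥1} â_n/(ρ̂_n(ρ̂_n + z)), where σ, μ ∈ ℝ, all a_n, â_n, ρ_n, ρ̂_n > 0, (ρ_n), (ρ̂_n) strictly increase to ∞, and Σ a_n ρ_n^{-2} < ∞, Σ â_n ρ̂_n^{-2} < ∞. Then for every z in the open upper half-plane (Im z > 0) with z ∉ {ρ_n} ∪ {−ρ̂_n}, one has Im(ψ(z)/z) > 0, provided σ² + μ·0 ≠ 0 or some a_n > 0 or some â_n > 0 (i.e. ψ is not identically of the form μz with the pure-drift part only, in which case Im(ψ(z)/z) = 0). -/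
open Real Filter Complex ComplexConjugate

/-! For real `c` and `x ≥ 0`, the partial fraction `z · x / (c (c − z))` has imaginary part
`x · Im z / |c − z|²`, so it maps the upper half-plane into its closure, and the bound
`|c| |Im z| ≤ |c − z| |z|` (from `Im ((c − z) z̄) = −c Im z`) makes `Σ xₙ / (cₙ (cₙ − z))` converge
absolutely off the real axis as soon as `Σ xₙ / cₙ²` does. Both series in `ψ(z)/z` are of this
form, the second with `cₙ = −ρ̂ₙ`, so `Im (ψ(z)/z)` is a sum of nonnegative terms, one of which is
strictly positive. -/

lemma abs_mul_abs_im_le_norm_sub_mul_norm (c : ℝ) (z : ℂ) :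
    |c| * |z.im| ≤ ‖(c : ℂ) - z‖ * ‖z‖ := by
  have him : (((c : ℂ) - z) * conj z).im = -(c * z.im) := by
    simp only [mul_im, sub_re, sub_im, ofReal_re, ofReal_im, conj_re, conj_im]; ring
  calc |c| * |z.im| = |(((c : ℂ) - z) * conj z).im| := by rw [him, abs_neg, abs_mul]
    _ ≤ ‖((c : ℂ) - z) * conj z‖ := abs_im_le_norm _
    _ = ‖(c : ℂ) - z‖ * ‖z‖ := by rw [norm_mul, Complex.norm_conj]

lemma norm_div_mul_sub_le (x c : ℝ) (hx : 0 ≤ x) {z : ℂ} (hz : z.im ≠ 0) :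
    ‖(x : ℂ) / (c * (c - z))‖ ≤ ‖z‖ / |z.im| * (x / c ^ 2) := by
  rcases eq_or_ne c 0 with rfl | hc
  · simp
  have hz0 : 0 < ‖z‖ := norm_pos_iff.2 fun h => hz (by simp [h])
  calc ‖(x : ℂ) / (c * (c - z))‖ = x * ‖z‖ / (|c| * (‖(c : ℂ) - z‖ * ‖z‖)) := by
        rw [norm_div, norm_mul, Complex.norm_real, Complex.norm_real, Real.norm_of_nonneg hx,
          Real.norm_eq_abs]
        field_simp
    _ ≤ x * ‖z‖ / (|c| * (|c| * |z.im|)) := by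
        gcongr _ / (_ * ?_)
        exact abs_mul_abs_im_le_norm_sub_mul_norm c z
    _ = ‖z‖ / |z.im| * (x / c ^ 2) := by
        rw [← sq_abs c]
        field_simp

lemma summable_div_mul_sub (x c : ℕ → ℝ) (hx : ∀ n, 0 ≤ x n)
    (hsum : Summable fun n => x n / c n ^ 2) {z : ℂ} (hz : z.im ≠ 0) :
    Summable fun n => (x n : ℂ) / (c n * (c n - z)) :=
  .of_norm_bounded (hsum.mul_left _) fun n => norm_div_mul_sub_le (x n) (c n) (hx n) hz

lemma im_mul_div_mul_sub (x : ℝ) {c : ℝ} (hc : c ≠ 0) (z : ℂ) :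
    (z * (x / (c * (c - z)))).im = x * z.im / normSq (c - z) := by
  rw [mul_div_assoc', div_im]
  simp only [mul_re, mul_im, sub_re, sub_im, ofReal_re, ofReal_im, normSq_mul, normSq_ofReal]
  field_simp
  ring

lemma im_mul_div_mul_sub_nonneg (x c : ℝ) (hx : 0 ≤ x) {z : ℂ} (hz : 0 ≤ z.im) :
    0 ≤ (z * (x / (c * (c - z)))).im := by
  rcases eq_or_ne c 0 with rfl | hc
  · simp
  rw [im_mul_div_mul_sub x hc]
  exact div_nonneg (mul_nonneg hx hz) (normSq_nonneg _)

lemma im_mul_tsum_div_mul_sub_nonneg (x c : ℕ → ℝ) (hx : ∀ n, 0 ≤ x n)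
    (hsum : Summable fun n => x n / c n ^ 2) {z : ℂ} (hz : 0 < z.im) :
    0 ≤ (z * ∑' n, (x n : ℂ) / (c n * (c n - z))).im := by
  rw [← tsum_mul_left, im_tsum ((summable_div_mul_sub x c hx hsum hz.ne').mul_left z)]
  exact tsum_nonneg fun n => im_mul_div_mul_sub_nonneg (x n) (c n) (hx n) hz.le

lemma im_mul_tsum_div_mul_sub_pos (x c : ℕ → ℝ) (hx : ∀ n, 0 ≤ x n)
    (hsum : Summable fun n => x n / c n ^ 2) {z : ℂ} (hz : 0 < z.im) {m : ℕ} (hxm : 0 < x m)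
    (hcm : c m ≠ 0) :
    0 < (z * ∑' n, (x n : ℂ) / (c n * (c n - z))).im := by
  have hs := (summable_div_mul_sub x c hx hsum hz.ne').mul_left z
  rw [← tsum_mul_left, im_tsum hs]
  refine (hs.mapL imCLM).tsum_pos (fun n => im_mul_div_mul_sub_nonneg (x n) (c n) (hx n) hz.le)
    m ?_
  rw [imCLM_apply, im_mul_div_mul_sub _ hcm]
  exact div_pos (mul_pos hxm hz) (normSq_pos.2 fun h => hz.ne' (by simpa using congrArg im h))

theorem laplace_exponent_herglotz_general
    (σ μ : ℝ) (a ahat ρ ρhat : ℕ → ℝ) (ψ : ℂ → ℂ)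
    (ha : ∀ n, 0 < a n) (hahat : ∀ n, 0 < ahat n)
    (hρpos : ∀ n, 0 < ρ n)
    (hsum : Summable (fun n => a n / (ρ n) ^ 2))
    (hsumhat : Summable (fun n => ahat n / (ρhat n) ^ 2))
    (hψ : ∀ z : ℂ, (∀ n, z ≠ (ρ n : ℂ) ∧ z ≠ -(ρhat n : ℂ)) →
      ψ z = (1 / 2) * (σ : ℂ) ^ 2 * z ^ 2 + (μ : ℂ) * z +
        z ^ 2 * ∑' n, (a n : ℂ) / ((ρ n : ℂ) * ((ρ n : ℂ) - z)) +
        z ^ 2 * ∑' n, (ahat n : ℂ) / ((ρhat n : ℂ) * ((ρhat n : ℂ) + z))) :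
    ∀ z : ℂ, 0 < z.im → (∀ n, z ≠ (ρ n : ℂ) ∧ z ≠ -(ρhat n : ℂ)) →
      0 < (ψ z / z).im := by
  intro z hz hpole
  have hz0 : z ≠ 0 := fun h => hz.ne' (by simp [h])
  have hneg : ∑' n, (ahat n : ℂ) / ((ρhat n : ℂ) * ((ρhat n : ℂ) + z)) =
      ∑' n, (ahat n : ℂ) / (((-ρhat n : ℝ) : ℂ) * ((-ρhat n : ℝ) - z)) :=
    tsum_congr fun n => by push_cast; ring_nf
  have hdiv : ψ z / z = ((σ ^ 2 / 2 : ℝ) : ℂ) * z + μ +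
      z * ∑' n, (a n : ℂ) / ((ρ n : ℂ) * ((ρ n : ℂ) - z)) +
      z * ∑' n, (ahat n : ℂ) / (((-ρhat n : ℝ) : ℂ) * ((-ρhat n : ℝ) - z)) := by
    rw [hψ z hpole, hneg]
    field_simp
    push_cast
    ring
  have hpos := im_mul_tsum_div_mul_sub_pos a ρ (fun n => (ha n).le) hsum hz (ha 0) (hρpos 0).ne'
  have hnonneg := im_mul_tsum_div_mul_sub_nonneg ahat (fun n => -ρhat n) (fun n => (hahat n).le)
    (by simpa only [neg_sq] using hsumhat) hz
  rw [hdiv]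
  simp only [add_im, im_ofReal_mul, ofReal_im]
  have : 0 ≤ σ ^ 2 / 2 * z.im := by positivity
  linarith

/-- Herglotz property of the Laplace exponent of a meromorphic Lévy process: with
`ψ(z) = σ²z²/2 + μz + z² Σ aₙ/(ρₙ(ρₙ−z)) + z² Σ âₙ/(ρ̂ₙ(ρ̂ₙ+z))`, one has
`Im(ψ(z)/z) > 0` for every `z` in the open upper half-plane avoiding the poles,
provided `ψ` is not a pure drift. -/
theorem laplace_exponent_herglotz
    (σ μ : ℝ) (a ahat ρ ρhat : ℕ → ℝ) (ψ : ℂ → ℂ)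
    (ha : ∀ n, 0 < a n) (hahat : ∀ n, 0 < ahat n)
    (hρpos : ∀ n, 0 < ρ n) (hρhatpos : ∀ n, 0 < ρhat n)
    (hρmono : StrictMono ρ) (hρhatmono : StrictMono ρhat)
    (hρtop : Tendsto ρ atTop atTop) (hρhattop : Tendsto ρhat atTop atTop)
    (hsum : Summable (fun n => a n / (ρ n) ^ 2))
    (hsumhat : Summable (fun n => ahat n / (ρhat n) ^ 2))
    (hψ : ∀ z : ℂ, (∀ n, z ≠ (ρ n : ℂ) ∧ z ≠ -(ρhat n : ℂ)) →
      ψ z = (1 / 2) * (σ : ℂ) ^ 2 * z ^ 2 + (μ : ℂ) * z +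
        z ^ 2 * ∑' n, (a n : ℂ) / ((ρ n : ℂ) * ((ρ n : ℂ) - z)) +
        z ^ 2 * ∑' n, (ahat n : ℂ) / ((ρhat n : ℂ) * ((ρhat n : ℂ) + z)))
    (hnontriv : σ ^ 2 ≠ 0 ∨ (∃ n, 0 < a n) ∨ (∃ n, 0 < ahat n)) :
    ∀ z : ℂ, 0 < z.im → (∀ n, z ≠ (ρ n : ℂ) ∧ z ≠ -(ρhat n : ℂ)) →
      0 < (ψ z / z).im :=
  laplace_exponent_herglotz_general σ μ a ahat ρ ρhat ψ ha hahat hρpos hsum hsumhat hψ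
end

section
/- With ρ, ζ interlacing positive increasing sequences (ζ_1 < ρ_1 < ζ_2 < ρ_2 < ..., ρ_n → ∞) and φ(z) = Π_{n≥1}(1 + z/ρ_n)/(1 + z/ζ_n), define a_0 = lim_{n→∞} Π_{k=1}^n ζ_k/ρ_k and, for n ≥ 1, a_n = (1 − ζ_n/ρ_n) Π_{k≠n} (1 − ζ_n/ρ_k)/(1 − ζ_n/ζ_k). Then a_0 ≥ 0, a_n > 0 for all n ≥ 1, and for all z > 0: φ(z) = a_0 + Σ_{n≥1} a_n ζ_n/(ζ_n + z). -/
/-! The finite products `∏_{k<N} (1 + z/ρ_k)/(1 + z/ζ_k)` are rational functions of `z` with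
simple poles at the `-ζ_k`, so Lagrange interpolation at the poles gives their partial fraction
expansion `∏_{k<N} ζ_k/ρ_k + ∑_{k<N} c_k^N ζ_k/(ζ_k + z)`. Interlacing makes every factor of
`c_k^N` positive, and those with index above `k` at least `1`, so `c_k^N` increases to `a_k` as
`N → ∞`. Since `∑ (1/ζ_n - 1/ρ_n)` is dominated by a telescoping sum, all the infinite products
converge, and the finite expansions pass to the limit by monotone convergence. -/

open Real Filter Finset Topology

namespace Lagrange

open Polynomial

theorem prod_sub_div_sub_eq_one_add_sum {F ι : Type*} [Field F] [DecidableEq ι] {s : Finset ι}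
    {v : ι → F} (hv : Set.InjOn v s) (w : ι → F) {x : F} (hx : ∀ i ∈ s, x ≠ v i) :
    ∏ i ∈ s, (x - w i) / (x - v i) =
      1 + ∑ i ∈ s, nodalWeight s v i * (∏ j ∈ s, (v i - w j)) / (x - v i) := by
  -- `nodal s w - nodal s v` is a difference of monic polynomials of degree `#s`,
  -- so it coincides with its interpolant at the nodes `v i`.
  have hdeg : (nodal s w - nodal s v).degree < #s := by
    rw [← degree_nodal (v := w)]
    exact degree_sub_lt_left (by rw [degree_nodal, degree_nodal]) nodal_ne_zero
      (by rw [nodal_monic.leadingCoeff, nodal_monic.leadingCoeff])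
  have hinterp := congrArg (eval x) (eq_interpolate hv hdeg)
  have hnodal : eval x (nodal s v) ≠ 0 := by
    rw [eval_nodal]; exact prod_ne_zero_iff.2 fun i hi => sub_ne_zero.2 (hx i hi)
  rw [eval_interpolate_not_at_node _ hx, eval_sub, sub_eq_iff_eq_add, ← mul_add_one] at hinterp
  rw [prod_div_distrib, ← eval_nodal, ← eval_nodal, hinterp, mul_div_cancel_left₀ _ hnodal,
    add_comm]
  congr 1
  refine sum_congr rfl fun i hi => ?_
  rw [eval_sub, eval_nodal_at_node hi, sub_zero, eval_nodal, div_eq_mul_inv]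
  ring

end Lagrange

section PartialFractions

open Lagrange

variable {K ι : Type*} [Field K] [DecidableEq ι]

noncomputable def partialCoeff (ρ ζ : ι → K) (s : Finset ι) (i : ι) : K :=
  (1 - ζ i / ρ i) * ∏ k ∈ s.erase i, (1 - ζ i / ρ k) / (1 - ζ i / ζ k)

theorem prod_div_eq_add_sum_partialCoeff {ρ ζ : ι → K} {s : Finset ι} (hζ : Set.InjOn ζ s)
    (hζ0 : ∀ k ∈ s, ζ k ≠ 0) (hρ0 : ∀ k ∈ s, ρ k ≠ 0) {z : K} (hz : ∀ k ∈ s, ζ k + z ≠ 0) :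
    ∏ k ∈ s, (1 + z / ρ k) / (1 + z / ζ k) =
      ∏ k ∈ s, ζ k / ρ k + ∑ k ∈ s, partialCoeff ρ ζ s k * (ζ k / (ζ k + z)) := by
  have hneg : Set.InjOn (fun k => -ζ k) s := fun i hi j hj h => hζ hi hj (neg_inj.1 h)
  have hpole : ∀ k ∈ s, z ≠ -ζ k := fun k hk h => hz k hk (by rw [h, add_neg_cancel])
  have hfactor : ∀ k ∈ s,
      (1 + z / ρ k) / (1 + z / ζ k) = ζ k / ρ k * ((z - -ρ k) / (z - -ζ k)) := by
    intro k hk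
    have : z + ζ k ≠ 0 := add_comm (ζ k) z ▸ hz k hk
    field_simp [hζ0 k hk, hρ0 k hk]
    ring
  rw [prod_congr rfl hfactor, prod_mul_distrib,
    Lagrange.prod_sub_div_sub_eq_one_add_sum hneg (fun k => -ρ k) hpole, mul_one_add, mul_sum]
  congr 1
  refine sum_congr rfl fun i hi => ?_
  have hnum : (∏ k ∈ s, ζ k / ρ k) * ∏ j ∈ s, (-ζ i - -ρ j) = ∏ k ∈ s, ζ k * (1 - ζ i / ρ k) := by
    rw [← prod_mul_distrib]
    refine prod_congr rfl fun k hk => ?_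
    field_simp [hρ0 k hk]
    ring
  have hweight : nodalWeight s (fun k => -ζ k) i * ∏ k ∈ s.erase i, ζ k * (1 - ζ i / ρ k) =
      ∏ k ∈ s.erase i, (1 - ζ i / ρ k) / (1 - ζ i / ζ k) := by
    rw [nodalWeight, ← prod_mul_distrib]
    refine prod_congr rfl fun k hk => ?_
    obtain ⟨hki, hk⟩ := mem_erase.1 hk
    have : ζ k - ζ i ≠ 0 := sub_ne_zero.2 fun h => hki (hζ hk hi h)
    rw [neg_sub_neg]
    field_simp [hζ0 k hk]
  have : z + ζ i ≠ 0 := add_comm (ζ i) z ▸ hz i hi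
  rw [mul_div_assoc', mul_left_comm, hnum, ← mul_prod_erase _ _ hi, mul_left_comm, hweight,
    partialCoeff]
  field_simp
  ring

end PartialFractions

theorem hasSum_of_tendsto_sum_range_of_le {b : ℕ → ℕ → ℝ} {a : ℕ → ℝ} {L : ℝ}
    (hb : ∀ k N, k < N → 0 ≤ b k N) (hba : ∀ k N, k < N → b k N ≤ a k)
    (hlim : ∀ k, Tendsto (b k) atTop (𝓝 (a k)))
    (hL : Tendsto (fun N => ∑ k ∈ range N, b k N) atTop (𝓝 L)) : HasSum a L := by
  have ha : ∀ k, 0 ≤ a k := fun k => (hb k _ k.lt_succ_self).trans (hba k _ k.lt_succ_self)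
  have hpartial : ∀ m, ∑ k ∈ range m, a k ≤ L := fun m =>
    le_of_tendsto_of_tendsto (tendsto_finsetSum _ fun k _ => hlim k) hL <|
      eventually_atTop.2 ⟨m, fun N hmN => sum_le_sum_of_subset_of_nonneg
        (range_subset_range.2 hmN) fun k hk _ => hb k N (mem_range.1 hk)⟩
  rw [hasSum_iff_tendsto_nat_of_nonneg ha]
  exact tendsto_of_tendsto_of_tendsto_of_le_of_le hL tendsto_const_nhds
    (fun N => sum_le_sum fun k hk => hba k N (mem_range.1 hk)) hpartial

structure Interlacing (ζ ρ : ℕ → ℝ) : Prop where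
  pos : ∀ n, 0 < ζ n
  lt : ∀ n, ζ n < ρ n
  lt_succ : ∀ n, ρ n < ζ (n + 1)

noncomputable def interlacingCoeff (ρ ζ : ℕ → ℝ) (n : ℕ) : ℝ :=
  (1 - ζ n / ρ n) * ∏' k : {k : ℕ // k ≠ n}, (1 - ζ n / ρ k) / (1 - ζ n / ζ k)

namespace Interlacing

variable {ζ ρ : ℕ → ℝ}

theorem pos_right (h : Interlacing ζ ρ) (n : ℕ) : 0 < ρ n := (h.pos n).trans (h.lt n)

theorem strictMono (h : Interlacing ζ ρ) : StrictMono ζ :=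
  strictMono_nat_of_lt_succ fun n => (h.lt n).trans (h.lt_succ n)

theorem inv_sub_inv_nonneg (h : Interlacing ζ ρ) (n : ℕ) : 0 ≤ (ζ n)⁻¹ - (ρ n)⁻¹ :=
  sub_nonneg.2 (inv_anti₀ (h.pos n) (h.lt n).le)

theorem summable_inv_sub_inv (h : Interlacing ζ ρ) : Summable fun n => (ζ n)⁻¹ - (ρ n)⁻¹ := by
  refine summable_of_sum_range_le (c := (ζ 0)⁻¹) h.inv_sub_inv_nonneg fun N => ?_
  calc ∑ n ∈ range N, ((ζ n)⁻¹ - (ρ n)⁻¹)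
      ≤ ∑ n ∈ range N, ((ζ n)⁻¹ - (ζ (n + 1))⁻¹) :=
        sum_le_sum fun n _ => sub_le_sub_left (inv_anti₀ (h.pos_right n) (h.lt_succ n).le) _
    _ = (ζ 0)⁻¹ - (ζ N)⁻¹ := sum_range_sub' (fun n => (ζ n)⁻¹) N
    _ ≤ (ζ 0)⁻¹ := sub_le_self _ (inv_nonneg.2 (h.pos N).le)

theorem multipliable_one_add_div (h : Interlacing ζ ρ) {z : ℝ} (hz : 0 ≤ z) :
    Multipliable fun n => (1 + z / ρ n) / (1 + z / ζ n) := by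
  have hbound : ∀ n, ‖(1 + z / ρ n) / (1 + z / ζ n) - 1‖ ≤ z * ((ζ n)⁻¹ - (ρ n)⁻¹) := by
    intro n
    have hζ := h.pos n
    have hden : 1 ≤ 1 + z / ζ n := le_add_of_nonneg_right (div_nonneg hz hζ.le)
    have hgap : z / ρ n ≤ z / ζ n := div_le_div_of_nonneg_left hz hζ (h.lt n).le
    have hsub : (1 + z / ρ n) / (1 + z / ζ n) - 1 = -((z / ζ n - z / ρ n) / (1 + z / ζ n)) := by
      field_simp
      ring
    rw [hsub, norm_neg, Real.norm_of_nonneg (div_nonneg (by linarith) (by linarith))]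
    calc (z / ζ n - z / ρ n) / (1 + z / ζ n) ≤ z / ζ n - z / ρ n := div_le_self (by linarith) hden
      _ = z * ((ζ n)⁻¹ - (ρ n)⁻¹) := by ring
  simpa using Real.multipliable_one_add_of_summable
    (Summable.of_norm_bounded (h.summable_inv_sub_inv.mul_left z) hbound)

theorem one_sub_div_pos (h : Interlacing ζ ρ) {n k : ℕ} (hnk : n < k) : 0 < 1 - ζ n / ζ k :=
  sub_pos.2 ((div_lt_one (h.pos k)).2 (h.strictMono hnk))

theorem factor_pos (h : Interlacing ζ ρ) {n k : ℕ} (hkn : k ≠ n) :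
    0 < (1 - ζ n / ρ k) / (1 - ζ n / ζ k) := by
  rcases hkn.lt_or_gt with hkn | hnk
  · have hρ : 1 < ζ n / ρ k :=
      (one_lt_div (h.pos_right k)).2 ((h.lt_succ k).trans_le (h.strictMono.monotone hkn))
    have hζ : 1 < ζ n / ζ k := (one_lt_div (h.pos k)).2 (h.strictMono hkn)
    exact div_pos_of_neg_of_neg (by linarith) (by linarith)
  · have hρ : ζ n / ρ k < 1 := (div_lt_one (h.pos_right k)).2 ((h.strictMono hnk).trans (h.lt k))
    exact div_pos (by linarith) (h.one_sub_div_pos hnk)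

theorem factor_sub_one_eq (h : Interlacing ζ ρ) {n k : ℕ} (hnk : n < k) :
    (1 - ζ n / ρ k) / (1 - ζ n / ζ k) - 1 = ζ n * ((ζ k)⁻¹ - (ρ k)⁻¹) / (1 - ζ n / ζ k) := by
  have := sub_ne_zero.2 (h.strictMono hnk).ne'
  have := (h.pos k).ne'
  have := (h.pos_right k).ne'
  field_simp
  ring

theorem multipliable_mulIndicator_factor (h : Interlacing ζ ρ) (n : ℕ) :
    Multipliable ({k | k ≠ n}.mulIndicator fun k => (1 - ζ n / ρ k) / (1 - ζ n / ζ k)) := by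
  have hbound : ∀ᶠ k in atTop,
      ‖{k | k ≠ n}.mulIndicator (fun k => (1 - ζ n / ρ k) / (1 - ζ n / ζ k)) k - 1‖ ≤
        ζ n / (1 - ζ n / ζ (n + 1)) * ((ζ k)⁻¹ - (ρ k)⁻¹) := by
    filter_upwards [eventually_gt_atTop n] with k hnk
    have hden : 1 - ζ n / ζ (n + 1) ≤ 1 - ζ n / ζ k :=
      sub_le_sub_left (div_le_div_of_nonneg_left (h.pos n).le (h.pos _)
        (h.strictMono.monotone hnk)) _
    rw [Set.mulIndicator_of_mem hnk.ne', h.factor_sub_one_eq hnk, Real.norm_of_nonneg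
      (div_nonneg (mul_nonneg (h.pos n).le (h.inv_sub_inv_nonneg k)) (h.one_sub_div_pos hnk).le),
      div_mul_eq_mul_div, mul_comm (ζ n)]
    exact div_le_div_of_nonneg_left (mul_nonneg (h.inv_sub_inv_nonneg k) (h.pos n).le)
      (h.one_sub_div_pos n.lt_succ_self) hden
  simpa using Real.multipliable_one_add_of_summable
    (Summable.of_norm_bounded_eventually_nat (h.summable_inv_sub_inv.mul_left _) hbound)

theorem partialCoeff_pos (h : Interlacing ζ ρ) (s : Finset ℕ) (n : ℕ) :
    0 < partialCoeff ρ ζ s n :=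
  mul_pos (sub_pos.2 ((div_lt_one (h.pos_right n)).2 (h.lt n)))
    (prod_pos fun _ hk => h.factor_pos (ne_of_mem_erase hk))

theorem partialCoeff_range_mono (h : Interlacing ζ ρ) {n N M : ℕ} (hnN : n < N) (hNM : N ≤ M) :
    partialCoeff ρ ζ (range N) n ≤ partialCoeff ρ ζ (range M) n := by
  refine mul_le_mul_of_nonneg_left (prod_le_prod_of_subset_of_one_le
    (erase_subset_erase _ (range_subset_range.2 hNM))
    (fun _ hk => (h.factor_pos (ne_of_mem_erase hk)).le) fun k hk hkN => ?_)
    (sub_nonneg.2 ((div_le_one (h.pos_right n)).2 (h.lt n).le))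
  have hnk : n < k := hnN.trans_le (by simpa [mem_erase, (mem_erase.1 hk).1] using hkN)
  linarith [h.factor_sub_one_eq hnk ▸ div_nonneg (mul_nonneg (h.pos n).le (h.inv_sub_inv_nonneg k))
    (h.one_sub_div_pos hnk).le]

theorem tendsto_partialCoeff (h : Interlacing ζ ρ) (n : ℕ) :
    Tendsto (fun N => partialCoeff ρ ζ (range N) n) atTop (𝓝 (interlacingCoeff ρ ζ n)) := by
  have hprod : ∀ N, ∏ k ∈ (range N).erase n, (1 - ζ n / ρ k) / (1 - ζ n / ζ k) =
      ∏ k ∈ range N, {k | k ≠ n}.mulIndicator (fun k => (1 - ζ n / ρ k) / (1 - ζ n / ζ k)) k := by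
    intro N
    rw [prod_mulIndicator_eq_prod_filter]
    congr 1
    ext k
    simp [and_comm]
  simp only [partialCoeff, hprod]
  have hsub : ∏' k : {k : ℕ // k ≠ n}, (1 - ζ n / ρ k) / (1 - ζ n / ζ k) =
      ∏' k, {k | k ≠ n}.mulIndicator (fun k => (1 - ζ n / ρ k) / (1 - ζ n / ζ k)) k :=
    _root_.tprod_subtype {k | k ≠ n} fun k => (1 - ζ n / ρ k) / (1 - ζ n / ζ k)
  rw [interlacingCoeff, hsub]
  exact ((h.multipliable_mulIndicator_factor n).hasProd.tendsto_prod_nat).const_mul _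

theorem partialCoeff_le_interlacingCoeff (h : Interlacing ζ ρ) {n N : ℕ} (hnN : n < N) :
    partialCoeff ρ ζ (range N) n ≤ interlacingCoeff ρ ζ n :=
  ge_of_tendsto (h.tendsto_partialCoeff n)
    (eventually_atTop.2 ⟨N, fun _ hM => h.partialCoeff_range_mono hnN hM⟩)

end Interlacing

theorem interlacing_product_partial_fractions_general
    (ρ ζ : ℕ → ℝ) (a0 : ℝ) (a : ℕ → ℝ)
    (hζpos : ∀ n, 0 < ζ n)
    (hinter : ∀ n, ζ n < ρ n) (hinter' : ∀ n, ρ n < ζ (n + 1))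
    (ha0 : Tendsto (fun n => ∏ k ∈ range n, ζ k / ρ k) atTop (nhds a0))
    (ha : ∀ n, a n = (1 - ζ n / ρ n) *
      ∏' k : {k : ℕ // k ≠ n}, (1 - ζ n / ρ (k : ℕ)) / (1 - ζ n / ζ (k : ℕ))) :
    0 ≤ a0 ∧ (∀ n, 0 < a n) ∧
      ∀ z : ℝ, 0 < z →
        (∏' n, (1 + z / ρ n) / (1 + z / ζ n)) = a0 + ∑' n, a n * (ζ n / (ζ n + z)) := by
  have h : Interlacing ζ ρ := ⟨hζpos, hinter, hinter'⟩
  obtain rfl : a = interlacingCoeff ρ ζ := funext ha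
  refine ⟨ge_of_tendsto' ha0 fun N => prod_nonneg fun k _ => (div_pos (h.pos k) (h.pos_right k)).le,
    fun n => (h.partialCoeff_pos _ n).trans_le (h.partialCoeff_le_interlacingCoeff n.lt_succ_self),
    fun z hz => ?_⟩
  have hweight : ∀ k, 0 < ζ k / (ζ k + z) := fun k => div_pos (h.pos k) (add_pos (h.pos k) hz)
  have hfinite : ∀ N, ∏ k ∈ range N, (1 + z / ρ k) / (1 + z / ζ k) - ∏ k ∈ range N, ζ k / ρ k =
      ∑ k ∈ range N, partialCoeff ρ ζ (range N) k * (ζ k / (ζ k + z)) := fun N => by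
    rw [prod_div_eq_add_sum_partialCoeff h.strictMono.injective.injOn (fun k _ => (h.pos k).ne')
      (fun k _ => (h.pos_right k).ne') (fun k _ => (add_pos (h.pos k) hz).ne'), add_sub_cancel_left]
  have hsum := hasSum_of_tendsto_sum_range_of_le
    (fun k N _ => mul_nonneg (h.partialCoeff_pos _ k).le (hweight k).le)
    (fun k N hkN =>
      mul_le_mul_of_nonneg_right (h.partialCoeff_le_interlacingCoeff hkN) (hweight k).le)
    (fun k => (h.tendsto_partialCoeff k).mul_const _)
    ((((h.multipliable_one_add_div hz.le).hasProd.tendsto_prod_nat).sub ha0).congr hfinite)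
  rw [hsum.tsum_eq, add_sub_cancel]

/-- Partial fraction decomposition of the interlacing infinite product:
`φ(z) = a₀ + Σₙ aₙ ζₙ/(ζₙ + z)` for `z > 0`, with `a₀ ≥ 0` and `aₙ > 0`. -/
theorem interlacing_product_partial_fractions
    (ρ ζ : ℕ → ℝ) (a0 : ℝ) (a : ℕ → ℝ)
    (hζpos : ∀ n, 0 < ζ n)
    (hinter : ∀ n, ζ n < ρ n) (hinter' : ∀ n, ρ n < ζ (n + 1))
    (hρtop : Tendsto ρ atTop atTop)
    (ha0 : Tendsto (fun n => ∏ k ∈ range n, ζ k / ρ k) atTop (nhds a0))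
    (ha : ∀ n, a n = (1 - ζ n / ρ n) *
      ∏' k : {k : ℕ // k ≠ n}, (1 - ζ n / ρ (k : ℕ)) / (1 - ζ n / ζ (k : ℕ))) :
    0 ≤ a0 ∧ (∀ n, 0 < a n) ∧
      ∀ z : ℝ, 0 < z →
        (∏' n, (1 + z / ρ n) / (1 + z / ζ n)) = a0 + ∑' n, a n * (ζ n / (ζ n + z)) :=
  interlacing_product_partial_fractions_general ρ ζ a0 a hζpos hinter hinter' ha0 ha
end

section
/- Let ρ, ζ be interlacing positive increasing sequences with ρ_n → ∞, a_0 and (a_n)_{n≥1} the coefficients of the partial fraction decomposition φ(z) = a_0 + Σ_{n≥1} a_n ζ_n/(ζ_n+z). Then φ(0) = 1, i.e. a_0 + Σ_{n≥1} a_n = 1; in particular the measure a_0 δ_0(dx) + Σ_{n≥1} a_n ζ_n e^{-ζ_n x} dx on [0,∞) is a probability measure. -/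
/-!
Truncating the product at `N` gives a rational function `φ_N` with `φ_N(0) = 1`; reading off its
partial fraction decomposition, this is a Lagrange interpolation identity at the nodes
`ζ_0, …, ζ_{N-1}`: the constant term `∏_{k<N} ζ_k/ρ_k` plus the truncated coefficients `a_n^{(N)}`
sum to `1`. For `k > n` the factors `(1 - ζ_n/ρ_k)/(1 - ζ_n/ζ_k)` of `a_n` are `≥ 1` and exceed
`1` by at most a multiple of `1/ζ_k - 1/ζ_{k+1}`, so their product converges and `a_n^{(N)}`
increases to `a_n` once `N > n`. A monotone limit then gives `a_0 + ∑ a_n = 1`, and since each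
`ζ_n e^{-ζ_n x}` is an exponential density, this sum is the total mass of the measure.
-/

open Real Filter Finset MeasureTheory Set Topology ProbabilityTheory Polynomial

namespace Lagrange

variable {F ι : Type*} [Field F] [DecidableEq ι] {s : Finset ι} {v : ι → F}

theorem eval_basis_eq_prod (i : ι) (z : F) :
    (Lagrange.basis s v i).eval z = ∏ j ∈ s.erase i, (z - v j) / (v i - v j) := by
  simp only [Lagrange.basis, Lagrange.basisDivisor, eval_prod, eval_mul, eval_C, eval_sub,
    eval_X, inv_mul_eq_div]

theorem eval_eq_sum_eval_mul_prod (hvs : Set.InjOn v s) {p : F[X]} (hp : p.degree < #s)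
    (z : F) : p.eval z = ∑ i ∈ s, p.eval (v i) * ∏ j ∈ s.erase i, (z - v j) / (v i - v j) := by
  conv_lhs => rw [eq_interpolate hvs hp, interpolate_apply]
  simp only [eval_finsetSum, eval_mul, eval_C, eval_basis_eq_prod]

theorem prod_sub_prod_eq_sum_mul_prod {x : ι → F} (hx : Set.InjOn x s) (y : ι → F) :
    ∏ j ∈ s, y j - ∏ j ∈ s, x j
      = ∑ i ∈ s, (∏ j ∈ s, (y j - x i)) * ∏ j ∈ s.erase i, x j / (x j - x i) := by
  have hneg (w : ι → F) : ∏ j ∈ s, (C (w j) - X) = (-1) ^ #s * ∏ j ∈ s, (X - C (w j)) := by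
    rw [← prod_neg]; simp only [neg_sub]
  have hmonic (w : ι → F) : (∏ j ∈ s, (X - C (w j))).Monic :=
    monic_prod_of_monic _ _ fun j _ => monic_X_sub_C (w j)
  have hdeg (w : ι → F) : (∏ j ∈ s, (X - C (w j))).degree = (#s : WithBot ℕ) := by
    simp [degree_prod]
  -- both products are `(-1)^#s` times a monic polynomial of degree `#s`
  have hPQ : (∏ j ∈ s, (C (y j) - X) - ∏ j ∈ s, (C (x j) - X)).degree < (#s : WithBot ℕ) := by
    rw [hneg, hneg, ← mul_sub]
    refine (degree_mul_le _ _).trans_lt ?_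
    rw [degree_pow, degree_neg, degree_one, nsmul_zero, zero_add, ← hdeg y]
    exact degree_sub_lt_left ((hdeg y).trans (hdeg x).symm) (hmonic y).ne_zero
      (by rw [(hmonic y).leadingCoeff, (hmonic x).leadingCoeff])
  have hinterp := eval_eq_sum_eval_mul_prod hx hPQ 0
  simp only [eval_sub, eval_prod, eval_C, eval_X, sub_zero] at hinterp
  rw [hinterp]
  refine sum_congr rfl fun i hi => ?_
  rw [prod_eq_zero (f := fun j => x j - x i) hi (sub_self _), sub_zero]
  congr 1
  exact prod_congr rfl fun j _ => by rw [zero_sub, ← neg_sub, neg_div_neg_eq]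

end Lagrange

section PartialFraction

variable {F ι : Type*} [Field F] [DecidableEq ι]

/-- The coefficient of `x i / (x i + z)` in the partial fraction decomposition of
`∏ j ∈ s, (1 + z / y j) / (1 + z / x j)`. -/
def partialFractionCoeff (s : Finset ι) (x y : ι → F) (i : ι) : F :=
  (1 - x i / y i) * ∏ j ∈ s.erase i, (1 - x i / y j) / (1 - x i / x j)

theorem partialFractionCoeff_eq {s : Finset ι} {x y : ι → F} (hx : Set.InjOn x s)
    (hx0 : ∀ j ∈ s, x j ≠ 0) (hy0 : ∀ j ∈ s, y j ≠ 0) {i : ι} (hi : i ∈ s) :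
    partialFractionCoeff s x y i
      = (∏ j ∈ s, (y j - x i)) * (∏ j ∈ s.erase i, x j / (x j - x i)) / ∏ j ∈ s, y j := by
  have hfactor : ∀ j ∈ s.erase i,
      (1 - x i / y j) / (1 - x i / x j) = (y j - x i) / y j * (x j / (x j - x i)) := by
    intro j hj
    obtain ⟨hji, hj⟩ := mem_erase.mp hj
    have hxji : x j - x i ≠ 0 := sub_ne_zero.mpr fun h => hji (hx hj hi h)
    rw [one_sub_div (hy0 j hj), one_sub_div (hx0 j hj), div_div_div_eq, div_mul_div_comm]
  rw [partialFractionCoeff, prod_congr rfl hfactor, prod_mul_distrib, one_sub_div (hy0 i hi),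
    ← mul_assoc, mul_prod_erase s (fun j => (y j - x i) / y j) hi, prod_div_distrib,
    div_mul_eq_mul_div]

theorem prod_div_add_sum_partialFractionCoeff {s : Finset ι} {x y : ι → F}
    (hx : Set.InjOn x s) (hx0 : ∀ j ∈ s, x j ≠ 0) (hy0 : ∀ j ∈ s, y j ≠ 0) :
    ∏ j ∈ s, x j / y j + ∑ i ∈ s, partialFractionCoeff s x y i = 1 := by
  have hy : ∏ j ∈ s, y j ≠ 0 := prod_ne_zero_iff.mpr hy0
  rw [sum_congr rfl fun i hi => partialFractionCoeff_eq hx hx0 hy0 hi, ← sum_div,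
    ← Lagrange.prod_sub_prod_eq_sum_mul_prod hx, prod_div_distrib, ← add_div, add_sub_cancel,
    div_self hy]

end PartialFraction

theorem summable_sub_succ_of_antitone {b : ℕ → ℝ} (hb : Antitone b) (h0 : ∀ n, 0 ≤ b n) :
    Summable fun n => b n - b (n + 1) :=
  summable_of_sum_range_le (fun n => sub_nonneg.mpr (hb n.le_succ)) fun n => by
    rw [sum_range_sub']; linarith [h0 n]

theorem Real.prod_range_le_tprod_of_one_le {F : ℕ → ℝ} (hF : Multipliable F)
    (h0 : ∀ k, 0 ≤ F k) {m : ℕ} (h1 : ∀ k, m ≤ k → 1 ≤ F k) {N : ℕ} (hN : m ≤ N) :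
    ∏ k ∈ range N, F k ≤ ∏' k, F k := by
  refine ge_of_tendsto hF.hasProd.tendsto_prod_nat (eventually_atTop.mpr ⟨N, fun M hM => ?_⟩)
  exact prod_le_prod_of_subset_of_one_le (range_subset_range.mpr hM) (fun k _ => h0 k)
    fun k _ hk => h1 k (hN.trans (by simpa using hk))

theorem prod_range_mulIndicator_ne {M : Type*} [CommMonoid M] (g : ℕ → M) (n N : ℕ) :
    ∏ k ∈ range N, {k | k ≠ n}.mulIndicator g k = ∏ k ∈ (range N).erase n, g k := by
  rw [prod_mulIndicator_eq_prod_filter]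
  simp [filter_ne']

theorem tprod_mulIndicator_ne {M : Type*} [CommMonoid M] [TopologicalSpace M] (g : ℕ → M) (n : ℕ) :
    ∏' k, {k | k ≠ n}.mulIndicator g k = ∏' k : {k // k ≠ n}, g k :=
  (tprod_subtype {k | k ≠ n} g).symm

theorem hasSum_of_tendsto_sum_of_tendsto_le {c : ℕ → ℕ → ℝ} {a : ℕ → ℝ} {s : ℝ}
    (hs : Tendsto (fun N => ∑ n ∈ range N, c N n) atTop (𝓝 s)) (hc : ∀ N n, 0 ≤ c N n)
    (hca : ∀ N n, n < N → c N n ≤ a n) (hlim : ∀ n, Tendsto (c · n) atTop (𝓝 (a n))) :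
    HasSum a s := by
  have ha : ∀ n, 0 ≤ a n := fun n => ge_of_tendsto' (hlim n) (hc · n)
  have hbound : ∀ M, ∑ n ∈ range M, a n ≤ s := fun M =>
    le_of_tendsto_of_tendsto (tendsto_finsetSum _ fun n _ => hlim n) hs <|
      eventually_atTop.mpr ⟨M, fun N hN =>
        sum_le_sum_of_subset_of_nonneg (range_subset_range.mpr hN) fun n _ _ => hc N n⟩
  have hsum : Summable a := summable_of_sum_range_le ha hbound
  refine hsum.hasSum_iff.mpr (le_antisymm (Real.tsum_le_of_sum_range_le ha hbound) ?_)
  refine le_of_tendsto' hs fun N => ?_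
  calc ∑ n ∈ range N, c N n ≤ ∑ n ∈ range N, a n :=
        sum_le_sum fun n hn => hca N n (mem_range.mp hn)
    _ ≤ ∑' n, a n := hsum.sum_le_tsum _ fun n _ => ha n

section Interlacing

variable {ρ ζ : ℕ → ℝ} {n k : ℕ}

/-- The factor `(1 + z / ρ k) / (1 + z / ζ k)` of `φ` evaluated at the pole `z = -ζ n`. -/
noncomputable def interlacingFactor (ρ ζ : ℕ → ℝ) (n k : ℕ) : ℝ := (1 - ζ n / ρ k) / (1 - ζ n / ζ k)

theorem interlacingFactor_pos (hζ : ∀ n, 0 < ζ n) (hmono : StrictMono ζ)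
    (hi : ∀ n, ζ n < ρ n) (hi' : ∀ n, ρ n < ζ (n + 1)) (hkn : k ≠ n) :
    0 < interlacingFactor ρ ζ n k := by
  have hρ : 0 < ρ k := (hζ k).trans (hi k)
  unfold interlacingFactor
  rcases hkn.lt_or_gt with hk | hk
  · have hρζ : ρ k < ζ n := (hi' k).trans_le (hmono.monotone hk)
    refine div_pos_of_neg_of_neg ?_ ?_
    · exact sub_neg.mpr ((one_lt_div hρ).mpr hρζ)
    · exact sub_neg.mpr ((one_lt_div (hζ k)).mpr (hmono hk))
  · refine div_pos ?_ ?_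
    · exact sub_pos.mpr ((div_lt_one hρ).mpr ((hmono hk).trans (hi k)))
    · exact sub_pos.mpr ((div_lt_one (hζ k)).mpr (hmono hk))

theorem one_le_interlacingFactor (hζ : ∀ n, 0 < ζ n) (hmono : StrictMono ζ)
    (hi : ∀ n, ζ n < ρ n) (hnk : n < k) : 1 ≤ interlacingFactor ρ ζ n k := by
  rw [interlacingFactor, one_le_div (sub_pos.mpr ((div_lt_one (hζ k)).mpr (hmono hnk)))]
  gcongr
  exacts [(hζ n).le, hζ k, (hi k).le]

theorem interlacingFactor_sub_one_le (hζ : ∀ n, 0 < ζ n) (hmono : StrictMono ζ)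
    (hi : ∀ n, ζ n < ρ n) (hi' : ∀ n, ρ n < ζ (n + 1)) (hnk : n < k) :
    interlacingFactor ρ ζ n k - 1
      ≤ ζ n / (1 - ζ n / ζ (n + 1)) * (1 / ζ k - 1 / ζ (k + 1)) := by
  have hden : 0 < 1 - ζ n / ζ (n + 1) :=
    sub_pos.mpr ((div_lt_one (hζ _)).mpr (hmono n.lt_succ_self))
  have hden_le : 1 - ζ n / ζ (n + 1) ≤ 1 - ζ n / ζ k := by
    gcongr
    exacts [(hζ n).le, hζ _, hmono.monotone hnk]
  have hnum : 0 ≤ ζ n / ζ k - ζ n / ρ k := by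
    rw [sub_nonneg]; gcongr; exacts [(hζ n).le, hζ k, (hi k).le]
  have hnum_le : ζ n / ζ k - ζ n / ρ k ≤ ζ n * (1 / ζ k - 1 / ζ (k + 1)) := by
    have : ζ n / ζ (k + 1) ≤ ζ n / ρ k := by
      gcongr; exacts [(hζ n).le, (hζ k).trans (hi k), (hi' k).le]
    rw [mul_sub, mul_one_div, mul_one_div]; linarith
  calc interlacingFactor ρ ζ n k - 1 = (ζ n / ζ k - ζ n / ρ k) / (1 - ζ n / ζ k) := by
        rw [interlacingFactor, div_sub_one (hden.trans_le hden_le).ne']; ring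
    _ ≤ ζ n * (1 / ζ k - 1 / ζ (k + 1)) / (1 - ζ n / ζ (n + 1)) := by
        gcongr
        exact hnum.trans hnum_le
    _ = _ := by ring

theorem multipliable_mulIndicator_interlacingFactor (hζ : ∀ n, 0 < ζ n) (hmono : StrictMono ζ)
    (hi : ∀ n, ζ n < ρ n) (hi' : ∀ n, ρ n < ζ (n + 1)) (n : ℕ) :
    Multipliable ({k | k ≠ n}.mulIndicator (interlacingFactor ρ ζ n)) := by
  have htele : Summable fun k => 1 / ζ k - 1 / ζ (k + 1) :=
    summable_sub_succ_of_antitone (fun j k hjk => one_div_le_one_div_of_le (hζ j)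
      (hmono.monotone hjk)) fun k => (one_div_pos.mpr (hζ k)).le
  have hsub : Summable fun k =>
      {k | k ≠ n}.mulIndicator (interlacingFactor ρ ζ n) k - 1 := by
    refine (htele.mul_left (ζ n / (1 - ζ n / ζ (n + 1)))).of_norm_bounded_eventually ?_
    filter_upwards [Nat.cofinite_eq_atTop ▸ eventually_gt_atTop n] with k hnk
    rw [mulIndicator_of_mem hnk.ne', Real.norm_of_nonneg
      (sub_nonneg.mpr (one_le_interlacingFactor hζ hmono hi hnk))]
    exact interlacingFactor_sub_one_le hζ hmono hi hi' hnk
  simpa using Real.multipliable_one_add_of_summable hsub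

theorem tendsto_prod_erase_interlacingFactor (hζ : ∀ n, 0 < ζ n) (hmono : StrictMono ζ)
    (hi : ∀ n, ζ n < ρ n) (hi' : ∀ n, ρ n < ζ (n + 1)) (n : ℕ) :
    Tendsto (fun N => ∏ k ∈ (range N).erase n, interlacingFactor ρ ζ n k) atTop
      (𝓝 (∏' k : {k // k ≠ n}, interlacingFactor ρ ζ n k)) := by
  have := (multipliable_mulIndicator_interlacingFactor hζ hmono hi hi' n).hasProd.tendsto_prod_nat
  simpa only [prod_range_mulIndicator_ne, tprod_mulIndicator_ne] using this

theorem prod_erase_interlacingFactor_le_tprod (hζ : ∀ n, 0 < ζ n) (hmono : StrictMono ζ)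
    (hi : ∀ n, ζ n < ρ n) (hi' : ∀ n, ρ n < ζ (n + 1)) {N : ℕ} (hnN : n < N) :
    ∏ k ∈ (range N).erase n, interlacingFactor ρ ζ n k
      ≤ ∏' k : {k // k ≠ n}, interlacingFactor ρ ζ n k := by
  have h0 (k : ℕ) : 0 ≤ {k | k ≠ n}.mulIndicator (interlacingFactor ρ ζ n) k := by
    by_cases hkn : k = n
    · simp [hkn]
    · rw [mulIndicator_of_mem hkn]; exact (interlacingFactor_pos hζ hmono hi hi' hkn).le
  have h1 (k : ℕ) (hk : n + 1 ≤ k) :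
      1 ≤ {k | k ≠ n}.mulIndicator (interlacingFactor ρ ζ n) k := by
    rw [mulIndicator_of_mem (by simp; omega)]; exact one_le_interlacingFactor hζ hmono hi hk
  have := Real.prod_range_le_tprod_of_one_le
    (multipliable_mulIndicator_interlacingFactor hζ hmono hi hi' n) h0 h1 hnN
  rwa [prod_range_mulIndicator_ne, tprod_mulIndicator_ne] at this

end Interlacing

theorem summable_mul_mul_exp_neg_mul {a ζ : ℕ → ℝ} (ha : ∀ n, 0 ≤ a n) (hζ : ∀ n, 0 ≤ ζ n)
    (hs : Summable a) {x : ℝ} (hx : 0 < x) :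
    Summable fun n => a n * ζ n * exp (-ζ n * x) := by
  refine (hs.div_const x).of_nonneg_of_le (fun n => by have := hζ n; have := ha n; positivity)
    fun n => ?_
  have h : ζ n * x * exp (-(ζ n * x)) ≤ 1 :=
    (mul_exp_neg_le_exp_neg_one _).trans (exp_le_one_iff.mpr (by norm_num))
  rw [le_div_iff₀ hx, neg_mul]
  calc a n * ζ n * exp (-(ζ n * x)) * x = a n * (ζ n * x * exp (-(ζ n * x))) := by ring
    _ ≤ a n := mul_le_of_le_one_right (ha n) h

theorem isProbabilityMeasure_dirac_add_withDensity_tsum_exp {ζ a : ℕ → ℝ} {a0 : ℝ}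
    (hζ : ∀ n, 0 < ζ n) (ha : ∀ n, 0 ≤ a n) (ha0 : 0 ≤ a0) (hsum : HasSum a (1 - a0)) :
    IsProbabilityMeasure
        ((ENNReal.ofReal a0) • Measure.dirac (0 : ℝ) +
          volume.withDensity (fun x => ENNReal.ofReal
            (Set.indicator (Ici (0 : ℝ))
              (fun y => ∑' n, a n * ζ n * Real.exp (-(ζ n) * y)) x))) := by
  have hdensity : (fun x => ENNReal.ofReal (indicator (Ici (0 : ℝ))
        (fun y => ∑' n, a n * ζ n * exp (-(ζ n) * y)) x))
      =ᵐ[volume] fun x => ∑' n, ENNReal.ofReal (a n) * exponentialPDF (ζ n) x := by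
    filter_upwards [Measure.ae_ne volume 0] with x hx0
    rcases hx0.lt_or_gt with hx | hx
    · simp [indicator_of_notMem (notMem_Ici.mpr hx), exponentialPDF_of_neg hx]
    · rw [indicator_of_mem (Set.mem_Ici.mpr hx.le), ENNReal.ofReal_tsum_of_nonneg
        (fun n => by have := hζ n; have := ha n; positivity)
        (summable_mul_mul_exp_neg_mul ha (fun n => (hζ n).le) hsum.summable hx)]
      refine tsum_congr fun n => ?_
      rw [exponentialPDF_of_nonneg hx.le, mul_assoc, ENNReal.ofReal_mul (ha n), neg_mul]
  have hmeas (n : ℕ) : Measurable (exponentialPDF (ζ n)) :=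
    (measurable_exponentialPDFReal _).ennreal_ofReal
  constructor
  rw [Measure.add_apply, Measure.smul_apply, smul_eq_mul,
    Measure.dirac_apply_of_mem (Set.mem_univ 0), mul_one, withDensity_apply _ MeasurableSet.univ,
    Measure.restrict_univ, lintegral_congr_ae hdensity,
    lintegral_tsum fun n => ((hmeas n).const_mul _).aemeasurable]
  simp only [lintegral_const_mul' _ _ ENNReal.ofReal_ne_top,
    lintegral_exponentialPDF_eq_one (hζ _), mul_one]
  rw [← ENNReal.ofReal_tsum_of_nonneg ha hsum.summable, hsum.tsum_eq,
    ← ENNReal.ofReal_add ha0 (hsum.nonneg ha), add_sub_cancel, ENNReal.ofReal_one]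

theorem interlacing_partial_fraction_total_mass_general
    (ρ ζ : ℕ → ℝ) (a0 : ℝ) (a : ℕ → ℝ)
    (hζpos : ∀ n, 0 < ζ n)
    (hinter : ∀ n, ζ n < ρ n) (hinter' : ∀ n, ρ n < ζ (n + 1))
    (ha0 : Tendsto (fun n => ∏ k ∈ range n, ζ k / ρ k) atTop (nhds a0))
    (ha : ∀ n, a n = (1 - ζ n / ρ n) *
      ∏' k : {k : ℕ // k ≠ n}, (1 - ζ n / ρ (k : ℕ)) / (1 - ζ n / ζ (k : ℕ))) :
    a0 + ∑' n, a n = 1 ∧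
      IsProbabilityMeasure
        ((ENNReal.ofReal a0) • Measure.dirac (0 : ℝ) +
          volume.withDensity (fun x => ENNReal.ofReal
            (Set.indicator (Ici (0 : ℝ))
              (fun y => ∑' n, a n * ζ n * Real.exp (-(ζ n) * y)) x))) := by
  have hρpos (n : ℕ) : 0 < ρ n := (hζpos n).trans (hinter n)
  have hmono : StrictMono ζ := strictMono_nat_of_lt_succ fun n => (hinter n).trans (hinter' n)
  have hfactor_nonneg (n : ℕ) : 0 ≤ 1 - ζ n / ρ n :=
    sub_nonneg.mpr ((div_le_one (hρpos n)).mpr (hinter n).le)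
  have hfinite (N : ℕ) :
      ∏ k ∈ range N, ζ k / ρ k + ∑ n ∈ range N, partialFractionCoeff (range N) ζ ρ n = 1 :=
    prod_div_add_sum_partialFractionCoeff hmono.injective.injOn (fun j _ => (hζpos j).ne')
      fun j _ => (hρpos j).ne'
  have hs : Tendsto (fun N => ∑ n ∈ range N, partialFractionCoeff (range N) ζ ρ n) atTop
      (𝓝 (1 - a0)) :=
    (ha0.const_sub 1).congr fun N => by linarith [hfinite N]
  have hc (N n : ℕ) : 0 ≤ partialFractionCoeff (range N) ζ ρ n :=
    mul_nonneg (hfactor_nonneg n) <| prod_nonneg fun k hk =>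
      (interlacingFactor_pos hζpos hmono hinter hinter' (mem_erase.mp hk).1).le
  have hlim (n : ℕ) : Tendsto (fun N => partialFractionCoeff (range N) ζ ρ n) atTop (𝓝 (a n)) := by
    rw [ha n]
    exact (tendsto_prod_erase_interlacingFactor hζpos hmono hinter hinter' n).const_mul _
  have hca (N n : ℕ) (hnN : n < N) : partialFractionCoeff (range N) ζ ρ n ≤ a n := by
    rw [ha n]
    exact mul_le_mul_of_nonneg_left
      (prod_erase_interlacingFactor_le_tprod hζpos hmono hinter hinter' hnN) (hfactor_nonneg n)
  have hsum : HasSum a (1 - a0) := hasSum_of_tendsto_sum_of_tendsto_le hs hc hca hlim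
  have ha0_nonneg : 0 ≤ a0 :=
    ge_of_tendsto' ha0 fun N => prod_nonneg fun k _ => (div_pos (hζpos k) (hρpos k)).le
  refine ⟨by rw [hsum.tsum_eq]; ring, ?_⟩
  exact isProbabilityMeasure_dirac_add_withDensity_tsum_exp hζpos
    (fun n => ge_of_tendsto' (hlim n) (hc · n)) ha0_nonneg hsum

/-- Total mass identity: with the partial-fraction coefficients of the interlacing product,
`a₀ + Σₙ aₙ = 1`; in particular `a₀ δ₀(dx) + Σₙ aₙ ζₙ e^{-ζₙ x} dx` on `[0,∞)` is a
probability measure. -/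
theorem interlacing_partial_fraction_total_mass
    (ρ ζ : ℕ → ℝ) (a0 : ℝ) (a : ℕ → ℝ)
    (hζpos : ∀ n, 0 < ζ n)
    (hinter : ∀ n, ζ n < ρ n) (hinter' : ∀ n, ρ n < ζ (n + 1))
    (hρtop : Tendsto ρ atTop atTop)
    (ha0 : Tendsto (fun n => ∏ k ∈ range n, ζ k / ρ k) atTop (nhds a0))
    (ha : ∀ n, a n = (1 - ζ n / ρ n) *
      ∏' k : {k : ℕ // k ≠ n}, (1 - ζ n / ρ (k : ℕ)) / (1 - ζ n / ζ (k : ℕ))) :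
    a0 + ∑' n, a n = 1 ∧
      IsProbabilityMeasure
        ((ENNReal.ofReal a0) • Measure.dirac (0 : ℝ) +
          volume.withDensity (fun x => ENNReal.ofReal
            (Set.indicator (Ici (0 : ℝ))
              (fun y => ∑' n, a n * ζ n * Real.exp (-(ζ n) * y)) x))) :=
  interlacing_partial_fraction_total_mass_general ρ ζ a0 a hζpos hinter hinter' ha0 ha
end
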